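/- Let b ∈ ℝ with 1/2 < b ≤ 2/3 and let F = F_{−1,b}. Then: (i) P = {(−b−2, −1), (b+2, −3), (b+4, 2b−1), (−b+4, 5)} is a periodic orbit of F of minimal period 4; (ii) R = {(−b, 2b−1), (−b, −2b+1), (3b−2, −2b+1)} and S = {((b−2)/3, (2b−1)/3), (−b, (2b−1)/3), ((b−2)/3, (−2b+1)/3)} are periodic orbits of F of minimal period 3; (iii) if 4/7 ≤ b ≤ 2/3, then Q₁ = {((b−4)/3, (4b−1)/3), ((2−5b)/3, −1), ((5b−2)/3, (−2b−1)/3), ((7b−4)/3, 2b−1)} is a periodic orbit of F of minimal period 4; (iv) if 1/2 < b ≤ 4/7, then Q₂ = {((−13b+4)/3, (4b−1)/3), (3b−2, (−14b+5)/3), ((5b−2)/3, (−2b−1)/3), ((7b−4)/3, 2b−1)} is a periodic orbit of F of minimal period 4. -/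

import Mathlib

/-- The piecewise linear map `F_{a,b}(x,y) = (|x| - y + a, x - |y| + b)`. -/
noncomputable def F (a b : ℝ) : ℝ × ℝ → ℝ × ℝ :=
  fun p => (|p.1| - p.2 + a, p.1 - |p.2| + b)

/-- `S` is a periodic orbit of `f` of minimal period `n`: it is the (finite) orbit
`{p, f p, …, f^[n-1] p}` of some periodic point `p` of minimal period `n`. -/
def IsPeriodicOrbit (f : ℝ × ℝ → ℝ × ℝ) (n : ℕ) (S : Set (ℝ × ℝ)) : Prop :=
  ∃ p : ℝ × ℝ, Function.minimalPeriod f p = n ∧ 0 < n ∧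
    S = (fun k : ℕ => f^[k] p) '' Set.Iio n

/-! Each listed point lies in a closed quadrant, on which `F` is affine, so the cycle equations are
linear identities in `b`. Since `3` is prime and `4 = 2²`, minimality of the period then only
requires `p ≠ F p`, resp. `p ≠ F² p`. -/

section Cycles

variable {f : ℝ × ℝ → ℝ × ℝ} {p₁ p₂ p₃ p₄ : ℝ × ℝ}

theorem isPeriodicOrbit_of_cycle_three (h₁ : f p₁ = p₂) (h₂ : f p₂ = p₃) (h₃ : f p₃ = p₁)
    (hne : p₁ ≠ p₂) : IsPeriodicOrbit f 3 {p₁, p₂, p₃} := by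
  have hper : Function.IsPeriodicPt f 3 p₁ := by
    simp [Function.IsPeriodicPt, Function.IsFixedPt, Function.iterate_succ_apply', h₁, h₂, h₃]
  have hfix : ¬Function.IsFixedPt f p₁ := fun h => hne (h.symm.trans h₁)
  refine ⟨p₁, Function.minimalPeriod_eq_prime hper hfix, by norm_num, ?_⟩
  have hIio : Set.Iio 3 = ({0, 1, 2} : Set ℕ) := by
    ext k; simp only [Set.mem_Iio, Set.mem_insert_iff, Set.mem_singleton_iff]; omega
  simp [hIio, Set.image_insert_eq, h₁, h₂]

theorem isPeriodicOrbit_of_cycle_four (h₁ : f p₁ = p₂) (h₂ : f p₂ = p₃) (h₃ : f p₃ = p₄)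
    (h₄ : f p₄ = p₁) (hne : p₁ ≠ p₃) : IsPeriodicOrbit f 4 {p₁, p₂, p₃, p₄} := by
  have hper : Function.IsPeriodicPt f (2 ^ 2) p₁ := by
    simp [Function.IsPeriodicPt, Function.IsFixedPt, Function.iterate_succ_apply', h₁, h₂, h₃, h₄]
  have hnper : ¬Function.IsPeriodicPt f (2 ^ 1) p₁ := by
    simpa [Function.IsPeriodicPt, Function.IsFixedPt, h₁, h₂] using hne.symm
  refine ⟨p₁, Function.minimalPeriod_eq_prime_pow hnper hper, by norm_num, ?_⟩
  have hIio : Set.Iio 4 = ({0, 1, 2, 3} : Set ℕ) := by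
    ext k; simp only [Set.mem_Iio, Set.mem_insert_iff, Set.mem_singleton_iff]; omega
  simp [hIio, Set.image_insert_eq, Function.iterate_succ_apply', h₁, h₂, h₃]

end Cycles

section Quadrants

variable {a b x y : ℝ}

theorem F_of_nonneg_of_nonneg (hx : 0 ≤ x) (hy : 0 ≤ y) :
    F a b (x, y) = (x - y + a, x - y + b) := by
  simp [F, abs_of_nonneg hx, abs_of_nonneg hy]

theorem F_of_nonneg_of_nonpos (hx : 0 ≤ x) (hy : y ≤ 0) :
    F a b (x, y) = (x - y + a, x + y + b) := by
  simp [F, abs_of_nonneg hx, abs_of_nonpos hy]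

theorem F_of_nonpos_of_nonneg (hx : x ≤ 0) (hy : 0 ≤ y) :
    F a b (x, y) = (-x - y + a, x - y + b) := by
  simp [F, abs_of_nonpos hx, abs_of_nonneg hy]

theorem F_of_nonpos_of_nonpos (hx : x ≤ 0) (hy : y ≤ 0) :
    F a b (x, y) = (-x - y + a, x + y + b) := by
  simp [F, abs_of_nonpos hx, abs_of_nonpos hy]

end Quadrants

section Orbits

variable {b : ℝ}

theorem isPeriodicOrbit_P (hb₁ : 1/2 ≤ b) (hb₂ : b ≤ 4) :
    IsPeriodicOrbit (F (-1) b) 4 {(-b-2, -1), (b+2, -3), (b+4, 2*b-1), (-b+4, 5)} := by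
  refine isPeriodicOrbit_of_cycle_four ?_ ?_ ?_ ?_ ?_
  · rw [F_of_nonpos_of_nonpos (by linarith) (by norm_num)]; congr 1 <;> ring
  · rw [F_of_nonneg_of_nonpos (by linarith) (by norm_num)]; congr 1 <;> ring
  · rw [F_of_nonneg_of_nonneg (by linarith) (by linarith)]; congr 1 <;> ring
  · rw [F_of_nonneg_of_nonneg (by linarith) (by norm_num)]; congr 1 <;> ring
  · simp only [ne_eq, Prod.mk.injEq, not_and]; intro h; linarith

theorem isPeriodicOrbit_R (hb₁ : 1/2 < b) (hb₂ : b ≤ 2/3) :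
    IsPeriodicOrbit (F (-1) b) 3 {(-b, 2*b-1), (-b, -2*b+1), (3*b-2, -2*b+1)} := by
  refine isPeriodicOrbit_of_cycle_three ?_ ?_ ?_ ?_
  · rw [F_of_nonpos_of_nonneg (by linarith) (by linarith)]; congr 1 <;> ring
  · rw [F_of_nonpos_of_nonpos (by linarith) (by linarith)]; congr 1 <;> ring
  · rw [F_of_nonpos_of_nonpos (by linarith) (by linarith)]; congr 1 <;> ring
  · simp only [ne_eq, Prod.mk.injEq, true_and]; intro h; linarith

theorem isPeriodicOrbit_S (hb₁ : 1/2 < b) (hb₂ : b ≤ 2) :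
    IsPeriodicOrbit (F (-1) b) 3
      {((b-2)/3, (2*b-1)/3), (-b, (2*b-1)/3), ((b-2)/3, (-2*b+1)/3)} := by
  refine isPeriodicOrbit_of_cycle_three ?_ ?_ ?_ ?_
  · rw [F_of_nonpos_of_nonneg (by linarith) (by linarith)]; congr 1 <;> ring
  · rw [F_of_nonpos_of_nonneg (by linarith) (by linarith)]; congr 1 <;> ring
  · rw [F_of_nonpos_of_nonpos (by linarith) (by linarith)]; congr 1 <;> ring
  · simp only [ne_eq, Prod.mk.injEq, and_true]; intro h; linarith

theorem isPeriodicOrbit_Q₁ (hb₁ : 4/7 ≤ b) (hb₂ : b ≤ 4) :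
    IsPeriodicOrbit (F (-1) b) 4
      {((b-4)/3, (4*b-1)/3), ((2-5*b)/3, -1), ((5*b-2)/3, (-2*b-1)/3), ((7*b-4)/3, 2*b-1)} := by
  refine isPeriodicOrbit_of_cycle_four ?_ ?_ ?_ ?_ ?_
  · rw [F_of_nonpos_of_nonneg (by linarith) (by linarith)]; congr 1 <;> ring
  · rw [F_of_nonpos_of_nonpos (by linarith) (by norm_num)]; congr 1 <;> ring
  · rw [F_of_nonneg_of_nonpos (by linarith) (by linarith)]; congr 1 <;> ring
  · rw [F_of_nonneg_of_nonneg (by linarith) (by linarith)]; congr 1 <;> ring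
  · simp only [ne_eq, Prod.mk.injEq, not_and]; intro h; linarith

theorem isPeriodicOrbit_Q₂ (hb₁ : 1/2 ≤ b) (hb₂ : b ≤ 4/7) :
    IsPeriodicOrbit (F (-1) b) 4
      {((-13*b+4)/3, (4*b-1)/3), (3*b-2, (-14*b+5)/3), ((5*b-2)/3, (-2*b-1)/3),
        ((7*b-4)/3, 2*b-1)} := by
  refine isPeriodicOrbit_of_cycle_four ?_ ?_ ?_ ?_ ?_
  · rw [F_of_nonpos_of_nonneg (by linarith) (by linarith)]; congr 1 <;> ring
  · rw [F_of_nonpos_of_nonpos (by linarith) (by linarith)]; congr 1 <;> ring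
  · rw [F_of_nonneg_of_nonpos (by linarith) (by linarith)]; congr 1 <;> ring
  · rw [F_of_nonpos_of_nonneg (by linarith) (by linarith)]; congr 1 <;> ring
  · simp only [ne_eq, Prod.mk.injEq, not_and]; intro h; linarith

end Orbits

/-- For `1/2 < b ≤ 2/3` and `F = F_{-1,b}`: `P` is a 4-periodic orbit, `R` and `S`
are 3-periodic orbits, and `Q₁` (when `4/7 ≤ b ≤ 2/3`) resp. `Q₂`
(when `1/2 < b ≤ 4/7`) are 4-periodic orbits. -/
theorem case_b_in_half_two_thirds (b : ℝ) (hb1 : 1/2 < b) (hb2 : b ≤ 2/3) :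
    IsPeriodicOrbit (F (-1) b) 4
      {(-b-2, -1), (b+2, -3), (b+4, 2*b-1), (-b+4, 5)} ∧
    IsPeriodicOrbit (F (-1) b) 3
      {(-b, 2*b-1), (-b, -2*b+1), (3*b-2, -2*b+1)} ∧
    IsPeriodicOrbit (F (-1) b) 3
      {((b-2)/3, (2*b-1)/3), (-b, (2*b-1)/3), ((b-2)/3, (-2*b+1)/3)} ∧
    (4/7 ≤ b →
      IsPeriodicOrbit (F (-1) b) 4
        {((b-4)/3, (4*b-1)/3), ((2-5*b)/3, -1), ((5*b-2)/3, (-2*b-1)/3),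
         ((7*b-4)/3, 2*b-1)}) ∧
    (b ≤ 4/7 →
      IsPeriodicOrbit (F (-1) b) 4
        {((-13*b+4)/3, (4*b-1)/3), (3*b-2, (-14*b+5)/3), ((5*b-2)/3, (-2*b-1)/3),
         ((7*b-4)/3, 2*b-1)}) :=
  ⟨isPeriodicOrbit_P hb1.le (by linarith), isPeriodicOrbit_R hb1 hb2,
    isPeriodicOrbit_S hb1 (by linarith), fun h => isPeriodicOrbit_Q₁ h (by linarith),
    fun h => isPeriodicOrbit_Q₂ hb1.le h⟩
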